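/- arXiv:1905.13492 — 10 statements merged into one kernel-verified Lean document; each statement's English description precedes it below -/
import Mathlib

section
/- Let f be a lattice submodular function on the box B = ∏_{i=1}^n {0,…,K_i}. Then f can be written as f = g + h, where g is a modular (separable) function on B and h is a DR-submodular function on B. Concretely, one may take g(x) = λ(x_1² + … + x_n²) for a suitable constant λ ≥ 0 and h = f − g. -/
/-- The `i`-th standard basis vector in `ℤ^n`. -/
def stdBasis (n : ℕ) (i : Fin n) : Fin n → ℤ := fun j => if j = i then 1 else 0

/-- Membership in the integer box `∏ i {0, …, K i}`. -/
def inBox {n : ℕ} (K : Fin n → ℤ) (x : Fin n → ℤ) : Prop :=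
  ∀ i, 0 ≤ x i ∧ x i ≤ K i

/-- Lattice submodularity on the box. -/
def LatticeSubmodular {n : ℕ} (K : Fin n → ℤ) (f : (Fin n → ℤ) → ℝ) : Prop :=
  ∀ x y, inBox K x → inBox K y →
    f (fun i => min (x i) (y i)) + f (fun i => max (x i) (y i)) ≤ f x + f y

/-- DR-submodularity (diminishing returns) on the box. -/
def DRSubmodular {n : ℕ} (K : Fin n → ℤ) (f : (Fin n → ℤ) → ℝ) : Prop :=
  ∀ x y : Fin n → ℤ, inBox K x → inBox K y → (∀ i, x i ≤ y i) →
    ∀ (i : Fin n) (c : ℤ), 0 < c → inBox K (y + c • stdBasis n i) →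
      f (y + c • stdBasis n i) - f y ≤ f (x + c • stdBasis n i) - f x

/-- A modular (separable) function on the box. -/
def IsModular {n : ℕ} (K : Fin n → ℤ) (g : (Fin n → ℤ) → ℝ) : Prop :=
  ∃ gi : Fin n → ℤ → ℝ, ∀ x, inBox K x → g x = ∑ i, gi i (x i)

lemma sq_sum_shift {n : ℕ} (z : Fin n → ℤ) (i : Fin n) (c : ℤ) :
    ∑ j, (((z + c • stdBasis n i) j : ℝ)) ^ 2
      = (∑ j, ((z j : ℝ)) ^ 2) + (2 * (c : ℝ) * (z i : ℝ) + (c : ℝ) ^ 2) := by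
  have hterm : ∀ j, (((z + c • stdBasis n i) j : ℝ)) ^ 2
      = ((z j : ℝ)) ^ 2 + (if j = i then 2 * (c : ℝ) * (z i : ℝ) + (c : ℝ) ^ 2 else 0) := by
    intro j
    by_cases hj : j = i
    · subst hj
      simp [stdBasis]
      ring
    · simp [stdBasis, hj]
  rw [Finset.sum_congr rfl (fun j _ => hterm j), Finset.sum_add_distrib,
    Finset.sum_ite_eq' Finset.univ i]
  simp

/-- any lattice submodular function on the box decomposes as a modular
function `g` plus a DR-submodular function `h`; concretely `g x = λ * ∑ i, (x i)^2`
for a suitable `λ ≥ 0` and `h = f - g`. -/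
theorem lattice_submodular_eq_modular_add_dr {n : ℕ} (K : Fin n → ℤ) (hK : ∀ i, 1 ≤ K i)
    (f : (Fin n → ℤ) → ℝ) (hf : LatticeSubmodular K f) :
    ∃ lam : ℝ, 0 ≤ lam ∧
      ∃ g h : (Fin n → ℤ) → ℝ,
        g = (fun x => lam * ∑ i, ((x i : ℝ)) ^ 2) ∧
        h = (fun x => f x - g x) ∧
        IsModular K g ∧ DRSubmodular K h ∧
        ∀ x, inBox K x → f x = g x + h x := by
  classical
  set T : Finset (Fin n → ℤ) := Finset.Icc 0 K with hT
  have hTne : T.Nonempty := ⟨0, by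
    simp only [hT, Finset.mem_Icc, Pi.le_def, Pi.zero_apply]
    exact ⟨fun i => le_refl 0, fun i => le_trans zero_le_one (hK i)⟩⟩
  set M : ℝ := T.sup' hTne (fun z => |f z|) with hM
  obtain ⟨z0, hz0⟩ := hTne
  have hMnonneg : 0 ≤ M := le_trans (abs_nonneg (f z0)) (Finset.le_sup' (fun z => |f z|) hz0)
  have hmem : ∀ z, inBox K z → z ∈ T := by
    intro z hz
    simp only [hT, Finset.mem_Icc]
    constructor <;> intro i
    · exact (hz i).1
    · exact (hz i).2
  have hbound : ∀ z, inBox K z → |f z| ≤ M := fun z hz => by rw [hM]; exact Finset.le_sup' (fun z => |f z|) (hmem z hz)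
  refine ⟨2 * M, by linarith, _, _, rfl, rfl, ?_, ?_, ?_⟩
  · exact ⟨fun i t => 2 * M * (t : ℝ) ^ 2, fun x _ => by simp [Finset.mul_sum]⟩
  · -- DR-submodularity of h
    intro x y hx hy hxy i c hc hyc
    have hstd : ∀ j, (c • stdBasis n i) j = if j = i then c else 0 := by
      intro j; simp [stdBasis, mul_ite]
    have hxc : inBox K (x + c • stdBasis n i) := by
      intro j
      have h1 := hyc j
      have h2 := hx j
      have h3 := hxy j
      simp only [Pi.add_apply, hstd] at h1 ⊢
      by_cases hj : j = i
      · subst hj; simp only [if_pos rfl] at h1 ⊢; omega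
      · simp only [if_neg hj] at h1 ⊢; omega
    have hQy := sq_sum_shift y i c
    have hQx := sq_sum_shift x i c
    simp only
    rw [hQy, hQx]
    -- goal reduces to f-part inequality vs 2M*2c(y_i - x_i)
    by_cases hd : y i = x i
    · -- use lattice submodularity
      have key := hf y (x + c • stdBasis n i) hy hxc
      have hmin : (fun j => min (y j) ((x + c • stdBasis n i) j)) = x := by
        funext j
        simp only [Pi.add_apply, hstd]
        by_cases hj : j = i
        · subst hj; simp; omega
        · simp [hj]; exact hxy j
      have hmax : (fun j => max (y j) ((x + c • stdBasis n i) j)) = y + c • stdBasis n i := by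
        funext j
        simp only [Pi.add_apply, hstd]
        by_cases hj : j = i
        · subst hj; simp; omega
        · simp [hj]; exact hxy j
      rw [hmin, hmax] at key
      have hyx : (y i : ℝ) = (x i : ℝ) := by exact_mod_cast hd
      rw [hyx]
      linarith [key]
    · -- y i ≥ x i + 1 : use the bound M
      have hd1 : x i + 1 ≤ y i := lt_of_le_of_ne (hxy i) (Ne.symm hd)
      have hdr : (x i : ℝ) + 1 ≤ (y i : ℝ) := by exact_mod_cast hd1
      have hcr : (1 : ℝ) ≤ (c : ℝ) := by exact_mod_cast hc
      have b1 := abs_le.mp (hbound _ hx)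
      have b2 := abs_le.mp (hbound _ hy)
      have b3 := abs_le.mp (hbound _ hxc)
      have b4 := abs_le.mp (hbound _ hyc)
      nlinarith [mul_le_mul hcr (by linarith : (1:ℝ) ≤ (y i : ℝ) - x i) (by norm_num) (by linarith)]
  · intro x _; ring
end

section
/- Let f be a lattice submodular function on the box B = ∏_{i=1}^n {0,…,K_i}, and let λ be a real number such that 2λ ≥ f(x + 2e_i) − 2f(x + e_i) + f(x) for every coordinate i and every x ∈ B with x + 2e_i ∈ B. Then the function h(x) = f(x) − λ(x_1² + … + x_n²) is DR-submodular on B. -/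
lemma lemA {n : ℕ} (K : Fin n → ℤ) (f : (Fin n → ℤ) → ℝ) (lam : ℝ)
    (hf : LatticeSubmodular K f)
    (hlam : ∀ (i : Fin n) (x : Fin n → ℤ), inBox K x → inBox K (x + 2 • stdBasis n i) →
      f (x + 2 • stdBasis n i) - 2 * f (x + stdBasis n i) + f x ≤ 2 * lam)
    (i : Fin n) :
    ∀ (N : ℕ) (x y : Fin n → ℤ), inBox K x → inBox K y → (∀ j, x j ≤ y j) →
      inBox K (y + stdBasis n i) → (∑ j, (y j - x j)) ≤ (N : ℤ) →
      f (y + stdBasis n i) - f y ≤ f (x + stdBasis n i) - f x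
        + 2 * lam * (((y i : ℤ) : ℝ) - ((x i : ℤ) : ℝ)) := by
  intro N
  induction N with
  | zero =>
    intro x y hx hy hxy hye hsum
    have hxy' : x = y := by
      funext j
      have h1 : ∀ j ∈ Finset.univ, (0:ℤ) ≤ y j - x j := fun j _ => by linarith [hxy j]
      have h2 : (∑ j, (y j - x j)) = 0 :=
        le_antisymm (by exact_mod_cast hsum) (Finset.sum_nonneg h1)
      have := (Finset.sum_eq_zero_iff_of_nonneg h1).mp h2 j (Finset.mem_univ j)
      omega
    subst hxy'
    simp
  | succ N ih =>
    intro x y hx hy hxy hye hsum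
    by_cases hxe : x = y
    · subst hxe; simp
    · obtain ⟨j, hj⟩ : ∃ j, x j < y j := by
        by_contra h
        push_neg at h
        exact hxe (funext fun j => le_antisymm (hxy j) (h j))
      set x' : Fin n → ℤ := x + stdBasis n j with hx'def
      have hx'app : ∀ k, x' k = x k + (if k = j then 1 else 0) := by
        intro k; simp [hx'def, stdBasis]
      have hx'box : inBox K x' := by
        intro k
        rw [hx'app]
        rcases hy k with ⟨_, _⟩
        rcases hx k with ⟨_, _⟩
        by_cases hk : k = j
        · subst hk; simp; constructor <;> [omega; linarith [hxy k]]
        · simp [hk]; omega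
      have hx'le : ∀ k, x' k ≤ y k := by
        intro k; rw [hx'app]
        by_cases hk : k = j
        · subst hk; simp; omega
        · simp [hk]; exact hxy k
      have hsum' : (∑ k, (y k - x' k)) ≤ (N : ℤ) := by
        have : (∑ k, (y k - x' k)) = (∑ k, (y k - x k)) - 1 := by
          have : ∀ k ∈ Finset.univ, y k - x' k = (y k - x k) - (if k = j then 1 else 0) := by
            intro k _; rw [hx'app]; ring
          rw [Finset.sum_congr rfl this, Finset.sum_sub_distrib,
            Finset.sum_ite_eq' Finset.univ j (fun _ => (1:ℤ)) ]
          simp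
        push_cast at hsum ⊢
        omega
      have IH := ih x' y hx'box hy hx'le hye hsum'
      by_cases hji : j = i
      · -- same coordinate: use hlam
        subst hji
        have h2box : inBox K (x + 2 • stdBasis n j) := by
          intro k
          rcases hx k with ⟨hk0, hk1⟩
          by_cases hk : k = j
          · subst hk
            have := (hye k).2
            simp [stdBasis, Pi.add_apply]
            constructor
            · omega
            · simp [stdBasis, Pi.add_apply] at this; omega
          · simp [stdBasis, Pi.add_apply, hk]; omega
        have hl := hlam j x hx h2box
        have heq : x + 2 • stdBasis n j = x' + stdBasis n j := by
          funext k; simp [hx'def, stdBasis]; split <;> ring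
        rw [heq] at hl
        have hxi' : x' j = x j + 1 := by rw [hx'app]; simp
        rw [hxi'] at IH
        have hring : 2 * lam * (((y j : ℤ):ℝ) - ((x j : ℤ):ℝ)) =
            2 * lam + 2 * lam * (((y j : ℤ):ℝ) - (((x j : ℤ):ℝ) + 1)) := by ring
        push_cast at IH ⊢
        rw [hring]
        push_cast
        linarith
      · -- different coordinate: lattice submodularity
        have haibox : inBox K (x + stdBasis n i) := by
          intro k
          rcases hx k with ⟨hk0, hk1⟩
          by_cases hk : k = i
          · subst hk
            have := (hye k).2
            simp [stdBasis, Pi.add_apply] at this ⊢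
            constructor
            · omega
            · have := hxy k; omega
          · simp [stdBasis, Pi.add_apply, hk]; omega
        have hsub := hf (x + stdBasis n i) x' haibox hx'box
        have hmin : (fun k => min ((x + stdBasis n i) k) (x' k)) = x := by
          funext k
          simp only [Pi.add_apply, stdBasis, hx'app]
          rcases eq_or_ne k i with hk | hk <;> rcases eq_or_ne k j with hk' | hk'
          · exact absurd (hk'.symm.trans hk) hji
          · simp [hk, hk']; omega
          · simp [hk, hk']; omega
          · simp [hk, hk']
        have hmax : (fun k => max ((x + stdBasis n i) k) (x' k)) = x' + stdBasis n i := by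
          funext k
          simp only [Pi.add_apply, stdBasis, hx'app]
          rcases eq_or_ne k i with hk | hk <;> rcases eq_or_ne k j with hk' | hk'
          · exact absurd (hk'.symm.trans hk) hji
          · simp [hk, hk']; omega
          · simp [hk, hk']; omega
          · simp [hk, hk']
        rw [hmin, hmax] at hsub
        have hxi' : x' i = x i := by rw [hx'app]; simp [Ne.symm hji]
        rw [hxi'] at IH
        linarith

lemma lemB {n : ℕ} (K : Fin n → ℤ) (f : (Fin n → ℤ) → ℝ) (lam : ℝ)
    (hf : LatticeSubmodular K f)
    (hlam : ∀ (i : Fin n) (x : Fin n → ℤ), inBox K x → inBox K (x + 2 • stdBasis n i) →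
      f (x + 2 • stdBasis n i) - 2 * f (x + stdBasis n i) + f x ≤ 2 * lam)
    (i : Fin n) :
    ∀ (m : ℕ) (x y : Fin n → ℤ), inBox K x → inBox K y → (∀ j, x j ≤ y j) →
      inBox K (y + (m : ℤ) • stdBasis n i) →
      f (y + (m : ℤ) • stdBasis n i) - f y ≤ f (x + (m : ℤ) • stdBasis n i) - f x
        + 2 * lam * (m : ℝ) * (((y i : ℤ) : ℝ) - ((x i : ℤ) : ℝ)) := by
  intro m
  induction m with
  | zero => intro x y hx hy hxy hbox; simp
  | succ m ih =>
    intro x y hx hy hxy hbox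
    have happ : ∀ (v : Fin n → ℤ) (c : ℤ) (k : Fin n),
        (v + c • stdBasis n i) k = v k + c * (if k = i then 1 else 0) := by
      intro v c k; simp [stdBasis]
    have hboxapp : ∀ k, 0 ≤ y k + ((m:ℤ)+1) * (if k = i then 1 else 0) ∧
        y k + ((m:ℤ)+1) * (if k = i then 1 else 0) ≤ K k := by
      intro k
      have := hbox k
      rw [happ] at this
      push_cast at this
      exact this
    have hym : inBox K (y + (m : ℤ) • stdBasis n i) := by
      intro k
      rw [happ]
      rcases hy k with ⟨h0, h1⟩
      rcases hboxapp k with ⟨h2, h3⟩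
      by_cases hk : k = i
      · subst hk; simp at h2 h3 ⊢; omega
      · simp [hk] at h2 h3 ⊢; omega
    have hxm : inBox K (x + (m : ℤ) • stdBasis n i) := by
      intro k
      rw [happ]
      rcases hx k with ⟨h0, h1⟩
      rcases hboxapp k with ⟨h2, h3⟩
      have := hxy k
      by_cases hk : k = i
      · subst hk; simp at h2 h3 ⊢; omega
      · simp [hk] at h2 h3 ⊢; omega
    have hle : ∀ k, (x + (m:ℤ) • stdBasis n i) k ≤ (y + (m:ℤ) • stdBasis n i) k := by
      intro k; rw [happ, happ]; have := hxy k
      by_cases hk : k = i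
      · subst hk; simp; omega
      · simp [hk]; omega
    have heq1 : (y + (m:ℤ) • stdBasis n i) + stdBasis n i
        = y + ((m+1 : ℕ) : ℤ) • stdBasis n i := by
      funext k
      simp only [Pi.add_apply, Pi.smul_apply, smul_eq_mul, stdBasis]
      push_cast
      ring
    have heq2 : (x + (m:ℤ) • stdBasis n i) + stdBasis n i
        = x + ((m+1 : ℕ) : ℤ) • stdBasis n i := by
      funext k
      simp only [Pi.add_apply, Pi.smul_apply, smul_eq_mul, stdBasis]
      push_cast
      ring
    have hyebox : inBox K ((y + (m:ℤ) • stdBasis n i) + stdBasis n i) := by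
      rw [heq1]
      intro k
      rw [happ]
      push_cast
      exact hboxapp k
    set N : ℕ := (∑ k, (y k - x k)).toNat with hN
    have hsum : (∑ k, ((y + (m:ℤ) • stdBasis n i) k - (x + (m:ℤ) • stdBasis n i) k)) ≤ (N : ℤ) := by
      have he : ∀ k ∈ Finset.univ, (y + (m:ℤ) • stdBasis n i) k - (x + (m:ℤ) • stdBasis n i) k
          = y k - x k := by
        intro k _; rw [happ, happ]; ring
      rw [Finset.sum_congr rfl he]
      exact Int.self_le_toNat _
    have A := lemA K f lam hf hlam i N (x + (m:ℤ) • stdBasis n i) (y + (m:ℤ) • stdBasis n i)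
      hxm hym hle hyebox hsum
    have IH := ih x y hx hy hxy hym
    rw [heq1, heq2] at A
    have hyi : (y + (m:ℤ) • stdBasis n i) i = y i + m := by rw [happ]; simp
    have hxi : (x + (m:ℤ) • stdBasis n i) i = x i + m := by rw [happ]; simp
    rw [hyi, hxi] at A
    push_cast at A ⊢
    nlinarith [A, IH]

/-- if `f` is lattice submodular on the box and `2λ` dominates all
second differences `f(x + 2eᵢ) - 2f(x + eᵢ) + f(x)`, then
`h(x) = f(x) - λ(x₁² + … + xₙ²)` is DR-submodular on the box. -/
theorem sub_quadratic_dr_submodular {n : ℕ} (K : Fin n → ℤ) (hK : ∀ i, 1 ≤ K i)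
    (f : (Fin n → ℤ) → ℝ) (hf : LatticeSubmodular K f) (lam : ℝ)
    (hlam : ∀ (i : Fin n) (x : Fin n → ℤ), inBox K x → inBox K (x + 2 • stdBasis n i) →
      f (x + 2 • stdBasis n i) - 2 * f (x + stdBasis n i) + f x ≤ 2 * lam) :
    DRSubmodular K (fun x => f x - lam * ∑ i, ((x i : ℝ)) ^ 2) := by
  intro x y hx hy hxy i c hc hbox
  dsimp only
  have hc0 : ((c.toNat : ℤ)) = c := Int.toNat_of_nonneg hc.le
  have hbox' : inBox K (y + (c.toNat : ℤ) • stdBasis n i) := by rw [hc0]; exact hbox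
  have B := lemB K f lam hf hlam i c.toNat x y hx hy hxy hbox'
  rw [hc0] at B
  have h3 : ((c.toNat : ℕ) : ℝ) = (c : ℝ) := by exact_mod_cast hc0
  rw [h3] at B
  have key : ∀ v : Fin n → ℤ, (∑ j, (((v + c • stdBasis n i) j : ℤ) : ℝ)^2)
      = (∑ j, ((v j : ℤ):ℝ)^2) + (2*(c:ℝ)*((v i:ℤ):ℝ) + (c:ℝ)^2) := by
    intro v
    have he : ∀ j ∈ Finset.univ, (((v + c • stdBasis n i) j : ℤ):ℝ)^2
        = ((v j:ℤ):ℝ)^2 + (if j = i then 2*(c:ℝ)*((v i:ℤ):ℝ) + (c:ℝ)^2 else 0) := by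
      intro j _
      simp only [Pi.add_apply, Pi.smul_apply, smul_eq_mul, stdBasis]
      by_cases hj : j = i
      · subst hj; simp; push_cast; ring
      · simp [hj]
    rw [Finset.sum_congr rfl he, Finset.sum_add_distrib,
      Finset.sum_ite_eq' Finset.univ i]
    simp
  rw [key x, key y]
  nlinarith [B]
end

section
/- Let f be a DR-submodular function on the box B = ∏_{i=1}^n {0,…,K_i}, let x, y ∈ B, and set a_i = max(x_i − y_i, 0) for each i. Then f(x ⊔ y) − f(y) ≥ Σ_{i=1}^n [f(x ⊔ y) − f((x ⊔ y) − a_i·e_i)]. -/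
/-- for DR-submodular `f` and `x, y` in the box, with
`aᵢ = max (xᵢ - yᵢ) 0`, we have
`f(x ⊔ y) - f(y) ≥ ∑ᵢ [f(x ⊔ y) - f((x ⊔ y) - aᵢ eᵢ)]`. -/
theorem dr_sup_sub_ge_sum {n : ℕ} (K : Fin n → ℤ) (hK : ∀ i, 1 ≤ K i)
    (f : (Fin n → ℤ) → ℝ) (hf : DRSubmodular K f)
    (x y : Fin n → ℤ) (hx : inBox K x) (hy : inBox K y) :
    ∑ i, (f (fun j => max (x j) (y j)) -
        f ((fun j => max (x j) (y j)) - (max (x i - y i) 0) • stdBasis n i)) ≤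
      f (fun j => max (x j) (y j)) - f y := by
  set s : Fin n → ℤ := fun j => max (x j) (y j) with hs
  set a : Fin n → ℤ := fun i => max (x i - y i) 0 with ha
  set z : ℕ → Fin n → ℤ := fun k j => if (j : ℕ) < k then s j else y j with hzdef
  have hsbox : inBox K s := fun i => ⟨le_max_of_le_left (hx i).1, max_le (hx i).2 (hy i).2⟩
  have hzbox : ∀ k, inBox K (z k) := by
    intro k i
    by_cases h : (i : ℕ) < k <;> simp only [hzdef, h, if_true, if_false]
    · exact hsbox i
    · exact hy i
  have hsai : ∀ i : Fin n, ∀ j, (s - a i • stdBasis n i) j = if j = i then y i else s j := by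
    intro i j
    by_cases h : j = i
    · subst h
      simp only [Pi.sub_apply, Pi.smul_apply, stdBasis, smul_eq_mul, ite_true, if_pos rfl,
        mul_one, ha, hs]
      omega
    · simp [Pi.sub_apply, Pi.smul_apply, stdBasis, h]
  have key : ∀ i : Fin n, f s - f (s - a i • stdBasis n i) ≤ f (z ((i : ℕ) + 1)) - f (z i) := by
    intro i
    have hai : 0 ≤ a i := le_max_right _ _
    have hz1 : z ((i : ℕ) + 1) = z i + a i • stdBasis n i := by
      funext j
      simp only [hzdef, Pi.add_apply, Pi.smul_apply, stdBasis, smul_eq_mul]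
      by_cases h : j = i
      · subst h
        simp only [lt_add_iff_pos_right, Nat.lt_irrefl, if_false, if_pos rfl, mul_one,
          Nat.lt_succ_iff, le_refl, if_pos, ha, hs]
        omega
      · have : (j : ℕ) < (i : ℕ) + 1 ↔ (j : ℕ) < (i : ℕ) := by
          constructor
          · intro hlt; rcases Nat.lt_succ_iff_lt_or_eq.1 hlt with h' | h'
            · exact h'
            · exact absurd (Fin.ext h') h
          · exact fun h' => Nat.lt_succ_of_lt h'
        simp [this, h]
    rcases eq_or_lt_of_le hai with h0 | hpos
    · have h1 : s - a i • stdBasis n i = s := by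
        funext j; rw [hsai]
        by_cases h : j = i
        · subst h; simp only [if_pos rfl]
          have : x j ≤ y j := by have := h0.symm; simp only [ha] at this; omega
          simp [hs, max_eq_right this]
        · simp [h]
      have h2 : z ((i : ℕ) + 1) = z i := by
        rw [hz1, ← h0]; funext j; simp
      rw [h1, h2]; simp
    · have hle : ∀ j, z i j ≤ (s - a i • stdBasis n i) j := by
        intro j
        rw [hsai]
        by_cases h : j = i
        · subst h
          simp [hzdef]
        · simp only [h, if_false, hzdef]
          by_cases h' : (j : ℕ) < (i : ℕ) <;> simp [h']
          exact le_max_right _ _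
      have hbox2 : inBox K (s - a i • stdBasis n i) := by
        intro j
        rw [hsai]
        by_cases h : j = i
        · simp only [h, if_pos rfl]; exact hy i
        · simp only [h, if_false]; exact hsbox j
      have hsum : s - a i • stdBasis n i + a i • stdBasis n i = s := by
        funext j; simp
      have hboxsum : inBox K (s - a i • stdBasis n i + a i • stdBasis n i) := by
        rw [hsum]; exact hsbox
      have := hf (z i) (s - a i • stdBasis n i) (hzbox i) hbox2 hle i (a i) hpos hboxsum
      rw [hsum, ← hz1] at this
      exact this
  calc ∑ i, (f s - f (s - a i • stdBasis n i))
      ≤ ∑ i : Fin n, (f (z ((i : ℕ) + 1)) - f (z i)) :=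
        Finset.sum_le_sum fun i _ => key i
    _ = ∑ k ∈ Finset.range n, (f (z (k + 1)) - f (z k)) :=
        Fin.sum_univ_eq_sum_range (fun k => f (z (k + 1)) - f (z k)) n
    _ = f (z n) - f (z 0) := Finset.sum_range_sub (fun k => f (z k)) n
    _ = f s - f y := by
        have h1 : z n = s := by funext j; simp [hzdef, j.isLt]
        have h2 : z 0 = y := by funext j; simp [hzdef]
        rw [h1, h2]
end

section
/- Let f be a DR-submodular function on the box B = ∏_{i=1}^n {0,…,K_i}, let x, y ∈ B, and set b_i = max(y_i − x_i, 0) for each i. Then f(y) − f(x ⊓ y) ≤ Σ_{i=1}^n [f((x ⊓ y) + b_i·e_i) − f(x ⊓ y)]. -/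
/-!
Walk from `v` to `v + d` by raising one coordinate at a time, by `dᵢ` in coordinate `i`.
Every intermediate point lies above `u`, so by diminishing returns each increment is at most the
gain of the same move made at `u`; summing telescopes. For `u = v = x ⊓ y` and
`d = y - x ⊓ y = (max (yᵢ - xᵢ) 0)ᵢ` this is the theorem.
-/

section

variable {n : ℕ} {K : Fin n → ℤ} {f : (Fin n → ℤ) → ℝ}

theorem sum_smul_stdBasis (d : Fin n → ℤ) : ∑ i, d i • stdBasis n i = d := by
  funext j
  simp [stdBasis]

theorem stdBasis_nonneg {i : Fin n} : 0 ≤ stdBasis n i := fun j => by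
  unfold stdBasis
  split_ifs <;> norm_num

theorem inBox.of_le_of_le {a b c : Fin n → ℤ} (ha : inBox K a) (hc : inBox K c)
    (hab : a ≤ b) (hbc : b ≤ c) : inBox K b := fun i =>
  ⟨(ha i).1.trans (hab i), (hbc i).trans (hc i).2⟩

theorem DRSubmodular.sub_le_sub_of_nonneg (hf : DRSubmodular K f) {u v : Fin n → ℤ}
    (hu : inBox K u) (hv : inBox K v) (huv : u ≤ v) (i : Fin n) {c : ℤ} (hc : 0 ≤ c)
    (hvc : inBox K (v + c • stdBasis n i)) :
    f (v + c • stdBasis n i) - f v ≤ f (u + c • stdBasis n i) - f u := by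
  rcases hc.eq_or_lt with rfl | hc
  · simp
  · exact hf u v hu hv huv i c hc hvc

theorem DRSubmodular.sub_le_sum_finset (hf : DRSubmodular K f) {u v d : Fin n → ℤ}
    (hu : inBox K u) (hv : inBox K v) (huv : u ≤ v) (hd : 0 ≤ d) (s : Finset (Fin n))
    (hvs : inBox K (v + ∑ i ∈ s, d i • stdBasis n i)) :
    f (v + ∑ i ∈ s, d i • stdBasis n i) - f v ≤
      ∑ i ∈ s, (f (u + d i • stdBasis n i) - f u) := by
  induction s using Finset.induction_on with
  | empty => simp
  | insert i s hi ih =>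
    have hstep_nonneg : ∀ j, 0 ≤ d j • stdBasis n j := fun j => smul_nonneg (hd j) stdBasis_nonneg
    have hv_le : v ≤ v + ∑ j ∈ s, d j • stdBasis n j :=
      le_add_of_nonneg_right (Finset.sum_nonneg fun j _ => hstep_nonneg j)
    have hle : v + ∑ j ∈ s, d j • stdBasis n j ≤ v + ∑ j ∈ insert i s, d j • stdBasis n j :=
      add_le_add_right (Finset.sum_le_sum_of_subset_of_nonneg (Finset.subset_insert i s)
        fun j _ _ => hstep_nonneg j) v
    have hvs' : inBox K (v + ∑ j ∈ s, d j • stdBasis n j) := hv.of_le_of_le hvs hv_le hle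
    rw [Finset.sum_insert hi, Finset.sum_insert hi]
    rw [Finset.sum_insert hi] at hvs
    rw [add_comm (d i • stdBasis n i), ← add_assoc] at hvs ⊢
    have hincr := hf.sub_le_sub_of_nonneg hu hvs' (huv.trans hv_le) i (hd i) hvs
    linarith [ih hvs']

theorem DRSubmodular.sub_le_sum (hf : DRSubmodular K f) {u v d : Fin n → ℤ}
    (hu : inBox K u) (hv : inBox K v) (huv : u ≤ v) (hd : 0 ≤ d) (hvd : inBox K (v + d)) :
    f (v + d) - f v ≤ ∑ i, (f (u + d i • stdBasis n i) - f u) := by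
  simpa only [sum_smul_stdBasis] using
    hf.sub_le_sum_finset hu hv huv hd Finset.univ (by rwa [sum_smul_stdBasis])

end

theorem dr_sub_inf_le_sum'_general {n : ℕ} (K : Fin n → ℤ)
    (f : (Fin n → ℤ) → ℝ) (hf : DRSubmodular K f)
    (x y : Fin n → ℤ) (hx : inBox K x) (hy : inBox K y) :
    f y - f (fun j => min (x j) (y j)) ≤
      ∑ i, (f ((fun j => min (x j) (y j)) + (max (y i - x i) 0) • stdBasis n i) -
        f (fun j => min (x j) (y j))) := by
  have hinf : inBox K (fun j => min (x j) (y j)) := fun j =>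
    ⟨le_min (hx j).1 (hy j).1, (min_le_right _ _).trans (hy j).2⟩
  have hy_eq : y = (fun j => min (x j) (y j)) + fun j => max (y j - x j) 0 := by
    funext j
    simp only [Pi.add_apply]
    omega
  have key := hf.sub_le_sum hinf hinf le_rfl (fun j => le_max_right (y j - x j) 0)
    (hy_eq ▸ hy)
  rwa [← hy_eq] at key

/-- for DR-submodular `f` and `x, y` in the box, with
`bᵢ = max (yᵢ - xᵢ) 0`, we have
`f(y) - f(x ⊓ y) ≤ ∑ᵢ [f((x ⊓ y) + bᵢ eᵢ) - f(x ⊓ y)]`. -/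
theorem dr_sub_inf_le_sum' {n : ℕ} (K : Fin n → ℤ) (hK : ∀ i, 1 ≤ K i)
    (f : (Fin n → ℤ) → ℝ) (hf : DRSubmodular K f)
    (x y : Fin n → ℤ) (hx : inBox K x) (hy : inBox K y) :
    f y - f (fun j => min (x j) (y j)) ≤
      ∑ i, (f ((fun j => min (x j) (y j)) + (max (y i - x i) 0) • stdBasis n i) -
        f (fun j => min (x j) (y j))) :=
  dr_sub_inf_le_sum'_general K f hf x y hx hy
end

section
/- Let f be a DR-submodular function on the box B = ∏_{i=1}^n {0,…,K_i}, let x, y ∈ B, and set a_i = max(x_i − y_i, 0) and b_i = max(y_i − x_i, 0) for each i. Then f(y) ≤ f(x) − Σ_{i=1}^n [f(x) − f(x − a_i·e_i)] + Σ_{i=1}^n [f((x ⊓ y) + b_i·e_i) − f(x ⊓ y)]. Moreover, this bound holds with equality when y = x. -/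
lemma sumVec_apply {n : ℕ} (d : Fin n → ℤ) (s : Finset (Fin n)) (k : Fin n) :
    (∑ j ∈ s, d j • stdBasis n j) k = if k ∈ s then d k else 0 := by
  simp [stdBasis, Finset.sum_apply, mul_ite]

lemma inBox_between {n : ℕ} {K m w p : Fin n → ℤ} (hm : inBox K m) (hw : inBox K w)
    (h1 : ∀ i, m i ≤ p i) (h2 : ∀ i, p i ≤ w i) : inBox K p :=
  fun i => ⟨le_trans (hm i).1 (h1 i), le_trans (h2 i) (hw i).2⟩

lemma partial_le {n : ℕ} (m d : Fin n → ℤ) (hd : ∀ i, 0 ≤ d i) (s : Finset (Fin n))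
    (k : Fin n) :
    m k ≤ (m + ∑ j ∈ s, d j • stdBasis n j) k ∧
      (m + ∑ j ∈ s, d j • stdBasis n j) k ≤ (m + d) k := by
  have := hd k
  simp only [Pi.add_apply, sumVec_apply]
  split <;> omega

lemma telescope_upper {n : ℕ} {K : Fin n → ℤ} {f : (Fin n → ℤ) → ℝ}
    (hf : DRSubmodular K f) (m d : Fin n → ℤ) (hd : ∀ i, 0 ≤ d i)
    (hm : inBox K m) (hw : inBox K (m + d)) (s : Finset (Fin n)) :
    f (m + ∑ j ∈ s, d j • stdBasis n j) - f m ≤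
      ∑ i ∈ s, (f (m + d i • stdBasis n i) - f m) := by
  induction s using Finset.induction with
  | empty => simp
  | @insert i s hi ih =>
    have hsum : m + ∑ j ∈ insert i s, d j • stdBasis n j =
        (m + ∑ j ∈ s, d j • stdBasis n j) + d i • stdBasis n i := by
      rw [Finset.sum_insert hi]; abel
    rw [hsum, Finset.sum_insert hi]
    rcases eq_or_lt_of_le (hd i) with h0 | hpos
    · have h1 : (d i) • stdBasis n i = 0 := by rw [← h0, zero_smul]
      simp only [h1, add_zero]
      linarith
    · have hz : inBox K (m + ∑ j ∈ s, d j • stdBasis n j) :=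
        inBox_between hm hw (fun k => (partial_le m d hd s k).1)
          (fun k => (partial_le m d hd s k).2)
      have hbox : inBox K ((m + ∑ j ∈ s, d j • stdBasis n j) + d i • stdBasis n i) := by
        rw [← hsum]
        exact inBox_between hm hw (fun k => (partial_le m d hd _ k).1)
          (fun k => (partial_le m d hd _ k).2)
      have key := hf m (m + ∑ j ∈ s, d j • stdBasis n j) hm hz
        (fun k => (partial_le m d hd s k).1) i (d i) hpos hbox
      linarith

lemma telescope_lower {n : ℕ} {K : Fin n → ℤ} {f : (Fin n → ℤ) → ℝ}
    (hf : DRSubmodular K f) (m d : Fin n → ℤ) (hd : ∀ i, 0 ≤ d i)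
    (hm : inBox K m) (hw : inBox K (m + d)) (s : Finset (Fin n)) :
    ∑ i ∈ s, (f (m + d) - f (m + d - d i • stdBasis n i)) ≤
      f (m + ∑ j ∈ s, d j • stdBasis n j) - f m := by
  induction s using Finset.induction with
  | empty => simp
  | @insert i s hi ih =>
    have hsum : m + ∑ j ∈ insert i s, d j • stdBasis n j =
        (m + ∑ j ∈ s, d j • stdBasis n j) + d i • stdBasis n i := by
      rw [Finset.sum_insert hi]; abel
    rw [hsum, Finset.sum_insert hi]
    rcases eq_or_lt_of_le (hd i) with h0 | hpos
    · have h1 : (d i) • stdBasis n i = 0 := by rw [← h0, zero_smul]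
      rw [h1, add_zero, sub_zero]
      linarith
    · have hz : inBox K (m + ∑ j ∈ s, d j • stdBasis n j) :=
        inBox_between hm hw (fun k => (partial_le m d hd s k).1)
          (fun k => (partial_le m d hd s k).2)
      have hle : ∀ k, (m + ∑ j ∈ s, d j • stdBasis n j) k ≤
          (m + d - d i • stdBasis n i) k := by
        intro k
        have hdk := hd k
        have e1 : (d i • stdBasis n i) k = if k = i then d i else 0 := by
          simp [stdBasis, mul_ite]
        simp only [Pi.add_apply, Pi.sub_apply, sumVec_apply, e1]
        rcases eq_or_ne k i with rfl | hk
        · simp only [if_pos rfl, if_neg hi]; omega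
        · simp only [if_neg hk]; split <;> omega
      have hvbox : inBox K (m + d - d i • stdBasis n i) := by
        refine inBox_between hm hw (fun k => ?_) (fun k => ?_) <;>
        · have hdk := hd k
          have e1 : (d i • stdBasis n i) k = if k = i then d i else 0 := by
            simp [stdBasis, mul_ite]
          simp only [Pi.add_apply, Pi.sub_apply, e1]
          rcases eq_or_ne k i with rfl | hk
          · simp only [if_pos rfl]; omega
          · simp only [if_neg hk]; omega
      have hvadd : (m + d - d i • stdBasis n i) + d i • stdBasis n i = m + d := by
        abel
      have hbox2 : inBox K ((m + d - d i • stdBasis n i) + d i • stdBasis n i) := by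
        rw [hvadd]; exact hw
      have key := hf (m + ∑ j ∈ s, d j • stdBasis n j) (m + d - d i • stdBasis n i)
        hz hvbox hle i (d i) hpos hbox2
      rw [hvadd] at key
      have hbox3 : inBox K ((m + ∑ j ∈ s, d j • stdBasis n j) + d i • stdBasis n i) := by
        rw [← hsum]
        exact inBox_between hm hw (fun k => (partial_le m d hd _ k).1)
          (fun k => (partial_le m d hd _ k).2)
      have key2 := hf (m + ∑ j ∈ s, d j • stdBasis n j)
        (m + ∑ j ∈ s, d j • stdBasis n j) hz hz (fun k => le_refl _) i (d i) hpos hbox3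
      linarith

/-- the first modular upper bound. For DR-submodular `f` and `x, y` in the
box, with `aᵢ = max (xᵢ - yᵢ) 0` and `bᵢ = max (yᵢ - xᵢ) 0`:
`f(y) ≤ f(x) - ∑ᵢ [f(x) - f(x - aᵢ eᵢ)] + ∑ᵢ [f((x ⊓ y) + bᵢ eᵢ) - f(x ⊓ y)]`,
with equality when `y = x`. -/
theorem dr_modular_upper_bound_one {n : ℕ} (K : Fin n → ℤ) (hK : ∀ i, 1 ≤ K i)
    (f : (Fin n → ℤ) → ℝ) (hf : DRSubmodular K f)
    (x y : Fin n → ℤ) (hx : inBox K x) (hy : inBox K y) :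
    (f y ≤ f x - ∑ i, (f x - f (x - (max (x i - y i) 0) • stdBasis n i))
        + ∑ i, (f ((fun j => min (x j) (y j)) + (max (y i - x i) 0) • stdBasis n i) -
            f (fun j => min (x j) (y j)))) ∧
    (y = x →
      f y = f x - ∑ i, (f x - f (x - (max (x i - y i) 0) • stdBasis n i))
        + ∑ i, (f ((fun j => min (x j) (y j)) + (max (y i - x i) 0) • stdBasis n i) -
            f (fun j => min (x j) (y j)))) := by
  constructor
  · set m : Fin n → ℤ := fun j => min (x j) (y j) with hmdef
    set a : Fin n → ℤ := fun i => max (x i - y i) 0 with hadef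
    set b : Fin n → ℤ := fun i => max (y i - x i) 0 with hbdef
    have ha : ∀ i, 0 ≤ a i := fun i => le_max_right _ _
    have hb : ∀ i, 0 ≤ b i := fun i => le_max_right _ _
    have hm : inBox K m := fun i =>
      ⟨le_min (hx i).1 (hy i).1, le_trans (min_le_left _ _) (hx i).2⟩
    have hma : m + a = x := by
      funext k; simp only [Pi.add_apply, hmdef, hadef]; omega
    have hmb : m + b = y := by
      funext k; simp only [Pi.add_apply, hmdef, hbdef]; omega
    have hxeq : m + ∑ j, a j • stdBasis n j = x := by
      rw [← hma]; funext k
      simp only [Pi.add_apply, sumVec_apply, Finset.mem_univ, if_true]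
    have hyeq : m + ∑ j, b j • stdBasis n j = y := by
      rw [← hmb]; funext k
      simp only [Pi.add_apply, sumVec_apply, Finset.mem_univ, if_true]
    have hwa : inBox K (m + a) := by rw [hma]; exact hx
    have hwb : inBox K (m + b) := by rw [hmb]; exact hy
    have up := telescope_upper hf m b hb hm hwb Finset.univ
    rw [hyeq] at up
    have lo := telescope_lower hf m a ha hm hwa Finset.univ
    rw [hxeq, hma] at lo
    linarith
  · intro h
    subst h
    simp [sub_self, min_self]
end

section
/- Let f be a DR-submodular function on the box B = ∏_{i=1}^n {0,…,K_i}, let x, y ∈ B, and set a_i = max(x_i − y_i, 0) and b_i = max(y_i − x_i, 0) for each i. Then f(y) ≤ f(x) − Σ_{i=1}^n [f(x ⊔ y) − f((x ⊔ y) − a_i·e_i)] + Σ_{i=1}^n [f(x + b_i·e_i) − f(x)]. Moreover, this bound holds with equality when y = x. -/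
lemma telescope_up {n : ℕ} (K : Fin n → ℤ) (f : (Fin n → ℤ) → ℝ) (hf : DRSubmodular K f)
    (x b : Fin n → ℤ) (hb : ∀ i, 0 ≤ b i) (hx : inBox K x)
    (hxb : ∀ j, x j + b j ≤ K j) :
    ∀ s : Finset (Fin n),
      f (fun j => x j + if j ∈ s then b j else 0) - f x ≤
        ∑ i ∈ s, (f (x + b i • stdBasis n i) - f x) := by
  intro s
  induction s using Finset.induction_on with
  | empty => simp
  | @insert i s hi ih =>
    rw [Finset.sum_insert hi]
    have hps : inBox K (fun j => x j + if j ∈ s then b j else 0) := by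
      intro j
      have h1 := (hx j).1; have h2 := hb j; have h3 := hxb j
      by_cases hmem : j ∈ s <;> simp [hmem] <;> omega
    have hkey : (fun j => x j + if j ∈ insert i s then b j else 0)
        = (fun j => x j + if j ∈ s then b j else 0) + b i • stdBasis n i := by
      funext j
      by_cases hj : j = i
      · subst hj; simp [stdBasis, hi]
      · simp [stdBasis, hj, Finset.mem_insert]
    rcases (hb i).eq_or_lt with h0 | hpos
    · have h1 : x + b i • stdBasis n i = x := by
        funext j; simp [stdBasis, ← h0]
      have h2 : (fun j => x j + if j ∈ insert i s then b j else 0)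
          = (fun j => x j + if j ∈ s then b j else 0) := by
        rw [hkey]; funext j; simp [stdBasis, ← h0]
      rw [h1, h2]; linarith
    · have hbox : inBox K ((fun j => x j + if j ∈ s then b j else 0) + b i • stdBasis n i) := by
        intro j
        have h1 := (hx j).1; have h2 := hb j; have h3 := hxb j; have h4 := (hps j).1
        have h5 := (hps j).2
        by_cases hj : j = i
        · subst hj; simp [stdBasis, hi]; omega
        · simp [stdBasis, hj]; omega
      have hle : ∀ j, x j ≤ x j + if j ∈ s then b j else 0 := by
        intro j; have := hb j; split <;> omega
      have hDR := hf x (fun j => x j + if j ∈ s then b j else 0) hx hps hle i (b i) hpos hbox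
      rw [hkey]; linarith

lemma telescope_down {n : ℕ} (K : Fin n → ℤ) (f : (Fin n → ℤ) → ℝ) (hf : DRSubmodular K f)
    (z a : Fin n → ℤ) (ha : ∀ i, 0 ≤ a i) (hz : inBox K z)
    (hza : ∀ j, 0 ≤ z j - a j) :
    ∀ s : Finset (Fin n),
      ∑ i ∈ s, (f z - f (z - a i • stdBasis n i)) ≤
        f z - f (fun j => z j - if j ∈ s then a j else 0) := by
  intro s
  induction s using Finset.induction_on with
  | empty => simp
  | @insert i s hi ih =>
    rw [Finset.sum_insert hi]
    rcases (ha i).eq_or_lt with h0 | hpos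
    · have h1 : z - a i • stdBasis n i = z := by
        funext j; simp [stdBasis, ← h0]
      have h2 : (fun j => z j - if j ∈ insert i s then a j else 0)
          = (fun j => z j - if j ∈ s then a j else 0) := by
        funext j
        by_cases hj : j = i
        · subst hj; simp [hi, ← h0]
        · simp [hj, Finset.mem_insert]
      rw [h1, h2]; linarith
    · have hqi : inBox K (fun j => z j - if j ∈ insert i s then a j else 0) := by
        intro j
        have h1 := (hz j).1; have h2 := (hz j).2; have h3 := ha j; have h4 := hza j
        by_cases hmem : j ∈ insert i s <;> simp [hmem] <;> omega
      have hv : inBox K (z - a i • stdBasis n i) := by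
        intro j
        have h1 := (hz j).1; have h2 := (hz j).2; have h3 := ha j; have h4 := hza j
        by_cases hj : j = i
        · subst hj; simp [stdBasis]; omega
        · simp [stdBasis, hj]; omega
      have hle : ∀ j, (fun j => z j - if j ∈ insert i s then a j else 0) j
          ≤ (z - a i • stdBasis n i) j := by
        intro j
        have h3 := ha j
        by_cases hj : j = i
        · subst hj; simp [stdBasis]
        · simp [stdBasis, hj]; split <;> omega
      have hbox : inBox K ((z - a i • stdBasis n i) + a i • stdBasis n i) := by
        have : (z - a i • stdBasis n i) + a i • stdBasis n i = z := by abel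
        rw [this]; exact hz
      have hDR := hf _ _ hqi hv hle i (a i) hpos hbox
      have e1 : (z - a i • stdBasis n i) + a i • stdBasis n i = z := by abel
      have e2 : (fun j => z j - if j ∈ insert i s then a j else 0) + a i • stdBasis n i
          = (fun j => z j - if j ∈ s then a j else 0) := by
        funext j
        by_cases hj : j = i
        · subst hj; simp [stdBasis, hi]
        · simp [stdBasis, hj, Finset.mem_insert]
      rw [e1, e2] at hDR
      linarith

/-- the second modular upper bound. For DR-submodular `f` and `x, y` in the
box, with `aᵢ = max (xᵢ - yᵢ) 0` and `bᵢ = max (yᵢ - xᵢ) 0`: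
`f(y) ≤ f(x) - ∑ᵢ [f(x ⊔ y) - f((x ⊔ y) - aᵢ eᵢ)] + ∑ᵢ [f(x + bᵢ eᵢ) - f(x)]`,
with equality when `y = x`. -/
theorem dr_modular_upper_bound_two {n : ℕ} (K : Fin n → ℤ) (hK : ∀ i, 1 ≤ K i)
    (f : (Fin n → ℤ) → ℝ) (hf : DRSubmodular K f)
    (x y : Fin n → ℤ) (hx : inBox K x) (hy : inBox K y) :
    (f y ≤ f x - ∑ i, (f (fun j => max (x j) (y j)) -
          f ((fun j => max (x j) (y j)) - (max (x i - y i) 0) • stdBasis n i))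
        + ∑ i, (f (x + (max (y i - x i) 0) • stdBasis n i) - f x)) ∧
    (y = x →
      f y = f x - ∑ i, (f (fun j => max (x j) (y j)) -
          f ((fun j => max (x j) (y j)) - (max (x i - y i) 0) • stdBasis n i))
        + ∑ i, (f (x + (max (y i - x i) 0) • stdBasis n i) - f x)) := by
  constructor
  · have hA := telescope_up K f hf x (fun i => max (y i - x i) 0)
      (fun i => le_max_right _ _) hx
      (fun j => by have h1 := (hx j).2; have h2 := (hy j).2
                   show x j + max (y j - x j) 0 ≤ K j; omega) Finset.univ
    have hB := telescope_down K f hf (fun j => max (x j) (y j)) (fun i => max (x i - y i) 0)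
      (fun i => le_max_right _ _)
      (fun j => by have h1 := (hx j).1; have h2 := (hx j).2; have h3 := (hy j).1
                   have h4 := (hy j).2
                   refine ⟨?_, ?_⟩ <;> (show _ ≤ _; dsimp only) <;> omega)
      (fun j => by have h3 := (hy j).1
                   show (0:ℤ) ≤ max (x j) (y j) - max (x j - y j) 0; omega) Finset.univ
    have e1 : (fun j => x j + if j ∈ Finset.univ then max (y j - x j) 0 else 0)
        = fun j => max (x j) (y j) := by funext j; simp; omega
    have e2 : (fun j => max (x j) (y j) - if j ∈ Finset.univ then max (x j - y j) 0 else 0)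
        = y := by funext j; simp; omega
    rw [e1] at hA
    rw [e2] at hB

    linarith
  · intro h
    subst h
    have h1 : (fun j => max (y j) (y j)) = y := funext fun j => max_self _
    have e3 : ∀ i : Fin n, max (y i - y i) (0:ℤ) = 0 := fun i => by omega
    rw [h1]
    simp [e3]
end

section
/- Let f be a DR-submodular function on the box B = ∏_{i=1}^n {0,…,K_i}, let x, y ∈ B, and set a_i = max(x_i − y_i, 0) and b_i = max(y_i − x_i, 0) for each i. Then f(y) ≤ f(x) − Σ_{i=1}^n [f(x) − f(x − a_i·e_i)] + Σ_{i=1}^n [f(b_i·e_i) − f(0)]. -/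
lemma sum_smul_stdBasis_apply {n : ℕ} (S : Finset (Fin n)) (a : Fin n → ℤ) (j : Fin n) :
    (∑ i ∈ S, a i • stdBasis n i) j = if j ∈ S then a j else 0 := by
  rw [Finset.sum_apply]
  simp only [Pi.smul_apply, stdBasis, smul_eq_mul, mul_ite, mul_one, mul_zero]
  simp [Finset.sum_ite_eq]

lemma removal_le {n : ℕ} (K : Fin n → ℤ) (f : (Fin n → ℤ) → ℝ) (hf : DRSubmodular K f)
    (x : Fin n → ℤ) (hx : inBox K x) (a : Fin n → ℤ) (ha0 : ∀ i, 0 ≤ a i) (hax : ∀ i, a i ≤ x i)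
    (S : Finset (Fin n)) :
    (∑ i ∈ S, (f x - f (x - a i • stdBasis n i))) ≤ f x - f (x - ∑ i ∈ S, a i • stdBasis n i) := by
  have hsub : ∀ (T : Finset (Fin n)) (j : Fin n),
      (x - ∑ k ∈ T, a k • stdBasis n k) j = x j - (if j ∈ T then a j else 0) := by
    intro T j; rw [Pi.sub_apply, sum_smul_stdBasis_apply]
  have hbox : ∀ T : Finset (Fin n), inBox K (x - ∑ k ∈ T, a k • stdBasis n k) := by
    intro T j
    rw [hsub]
    have := (hx j).1; have := (hx j).2; have := ha0 j; have := hax j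
    split_ifs <;> constructor <;> linarith
  induction S using Finset.induction with
  | empty => simp
  | @insert i S hi ih =>
    rw [Finset.sum_insert hi]
    have key : f x - f (x - a i • stdBasis n i)
        ≤ f (x - ∑ j ∈ S, a j • stdBasis n j) - f (x - ∑ j ∈ insert i S, a j • stdBasis n j) := by
      rcases eq_or_lt_of_le (ha0 i) with h0 | hpos
      · have hx0 : x - a i • stdBasis n i = x := by
          rw [← h0]; simp
        have hins : (x - ∑ j ∈ insert i S, a j • stdBasis n j)
            = x - ∑ j ∈ S, a j • stdBasis n j := by
          rw [Finset.sum_insert hi, ← h0]; simp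
        rw [hx0, hins]; simp
      · have hsingle : x - a i • stdBasis n i = x - ∑ k ∈ ({i} : Finset (Fin n)), a k • stdBasis n k := by
          simp
        have hle : ∀ j, (x - ∑ k ∈ insert i S, a k • stdBasis n k) j
            ≤ (x - a i • stdBasis n i) j := by
          intro j
          rw [hsub, hsingle, hsub]
          have := ha0 j
          by_cases hj : j = i <;> simp [hj, Finset.mem_insert] <;> split_ifs <;> linarith
        have heq1 : (x - a i • stdBasis n i) + a i • stdBasis n i = x := by
          funext j; simp
        have heq2 : (x - ∑ k ∈ insert i S, a k • stdBasis n k) + a i • stdBasis n i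
            = x - ∑ k ∈ S, a k • stdBasis n k := by
          funext j
          simp only [Pi.add_apply, hsub, Pi.smul_apply, stdBasis, smul_eq_mul, Finset.mem_insert]
          by_cases hj : j = i
          · subst hj; simp [hi]
          · simp [hj]
        have h2 := hf (x - ∑ k ∈ insert i S, a k • stdBasis n k) (x - a i • stdBasis n i)
          (hbox _) (by rw [hsingle]; exact hbox _) hle i (a i) hpos (by rw [heq1]; exact hx)
        rw [heq1, heq2] at h2
        linarith
    linarith

lemma addition_le {n : ℕ} (K : Fin n → ℤ) (f : (Fin n → ℤ) → ℝ) (hf : DRSubmodular K f)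
    (m b : Fin n → ℤ) (hm0 : ∀ j, 0 ≤ m j) (hb0 : ∀ j, 0 ≤ b j) (hmb : ∀ j, m j + b j ≤ K j)
    (S : Finset (Fin n)) :
    f (m + ∑ i ∈ S, b i • stdBasis n i) - f m ≤ ∑ i ∈ S, (f (b i • stdBasis n i) - f 0) := by
  have hadd : ∀ (T : Finset (Fin n)) (j : Fin n),
      (m + ∑ k ∈ T, b k • stdBasis n k) j = m j + (if j ∈ T then b j else 0) := by
    intro T j; rw [Pi.add_apply, sum_smul_stdBasis_apply]
  have hbox : ∀ T : Finset (Fin n), inBox K (m + ∑ k ∈ T, b k • stdBasis n k) := by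
    intro T j
    rw [hadd]
    have := hm0 j; have := hb0 j; have := hmb j
    split_ifs <;> constructor <;> linarith
  induction S using Finset.induction with
  | empty => simp
  | @insert i S hi ih =>
    have key : f (m + ∑ k ∈ insert i S, b k • stdBasis n k) - f (m + ∑ k ∈ S, b k • stdBasis n k)
        ≤ f (b i • stdBasis n i) - f 0 := by
      rcases eq_or_lt_of_le (hb0 i) with h0 | hpos
      · have hins : (m + ∑ k ∈ insert i S, b k • stdBasis n k)
            = m + ∑ k ∈ S, b k • stdBasis n k := by
          rw [Finset.sum_insert hi, ← h0]; simp
        have hb0' : b i • stdBasis n i = (0 : Fin n → ℤ) := by rw [← h0]; simp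
        rw [hins, hb0']; simp
      · have hbox0 : inBox K (0 : Fin n → ℤ) := by
          intro j
          have := hm0 j; have := hb0 j; have := hmb j
          constructor <;> simp <;> linarith
        have hle : ∀ j, (0 : Fin n → ℤ) j ≤ (m + ∑ k ∈ S, b k • stdBasis n k) j := by
          intro j
          rw [hadd]
          have := hm0 j; have := hb0 j
          simp only [Pi.zero_apply]
          split_ifs <;> linarith
        have heq2 : (m + ∑ k ∈ S, b k • stdBasis n k) + b i • stdBasis n i
            = m + ∑ k ∈ insert i S, b k • stdBasis n k := by
          funext j
          simp only [Pi.add_apply, hadd, Pi.smul_apply, stdBasis, smul_eq_mul, Finset.mem_insert]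
          by_cases hj : j = i
          · subst hj; simp [hi]
          · simp [hj]
        have h2 := hf (0 : Fin n → ℤ) (m + ∑ k ∈ S, b k • stdBasis n k)
          hbox0 (hbox _) hle i (b i) hpos (by rw [heq2]; exact hbox _)
        rw [heq2, zero_add] at h2
        linarith
    have hs : (∑ j ∈ insert i S, (f (b j • stdBasis n j) - f 0))
        = (f (b i • stdBasis n i) - f 0) + ∑ j ∈ S, (f (b j • stdBasis n j) - f 0) :=
      Finset.sum_insert hi
    rw [hs]
    linarith


/-- For DR-submodular `f` and `x, y` in the box, with
`aᵢ = max (xᵢ - yᵢ) 0` and `bᵢ = max (yᵢ - xᵢ) 0`: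
`f(y) ≤ f(x) - ∑ᵢ [f(x) - f(x - aᵢ eᵢ)] + ∑ᵢ [f(bᵢ eᵢ) - f(0)]`. -/
theorem dr_modular_upper_bound_one' {n : ℕ} (K : Fin n → ℤ) (hK : ∀ i, 1 ≤ K i)
    (f : (Fin n → ℤ) → ℝ) (hf : DRSubmodular K f)
    (x y : Fin n → ℤ) (hx : inBox K x) (hy : inBox K y) :
    f y ≤ f x - ∑ i, (f x - f (x - (max (x i - y i) 0) • stdBasis n i))
        + ∑ i, (f ((max (y i - x i) 0) • stdBasis n i) - f 0) := by
  set a : Fin n → ℤ := fun i => max (x i - y i) 0 with ha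
  set b : Fin n → ℤ := fun i => max (y i - x i) 0 with hb
  set m : Fin n → ℤ := fun i => min (x i) (y i) with hm
  have hm_eq : m = x - ∑ i, a i • stdBasis n i := by
    funext j
    rw [Pi.sub_apply, sum_smul_stdBasis_apply]
    simp only [hm, ha, Finset.mem_univ, if_true]
    omega
  have hy_eq : y = m + ∑ i, b i • stdBasis n i := by
    funext j
    rw [Pi.add_apply, sum_smul_stdBasis_apply]
    simp only [hm, hb, Finset.mem_univ, if_true]
    omega
  have h1 := removal_le K f hf x hx a (fun i => le_max_right _ _)
    (fun i => by have := (hy i).1; have := (hx i).1; simp only [ha]; omega) Finset.univ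
  have h2 := addition_le K f hf m b (fun j => by have := (hx j).1; have := (hy j).1; simp only [hm]; omega)
    (fun j => le_max_right _ _)
    (fun j => by have := (hy j).2; have := (hx j).2; simp only [hm, hb]; omega) Finset.univ
  rw [← hm_eq] at h1
  rw [← hy_eq] at h2
  linarith
end

section
/- Let f be a DR-submodular function on the box B = ∏_{i=1}^n {0,…,K_i}, let K = (K_1,…,K_n) denote the maximal element of B, let x, y ∈ B, and set a_i = max(x_i − y_i, 0) and b_i = max(y_i − x_i, 0) for each i. Then f(y) ≤ f(x) − Σ_{i=1}^n [f(K) − f(K − a_i·e_i)] + Σ_{i=1}^n [f(x + b_i·e_i) − f(x)]. -/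
lemma smul_stdBasis_apply {n : ℕ} (c : ℤ) (i j : Fin n) :
    (c • stdBasis n i) j = if j = i then c else 0 := by
  simp [stdBasis, mul_ite]

lemma inc_phase {n : ℕ} (K : Fin n → ℤ) (f : (Fin n → ℤ) → ℝ) (hf : DRSubmodular K f)
    (x y : Fin n → ℤ) (hx : inBox K x) (hy : inBox K y) (S : Finset (Fin n)) :
    f (fun i => if i ∈ S then max (x i) (y i) else x i) - f x ≤
      ∑ i ∈ S, (f (x + (max (y i - x i) 0) • stdBasis n i) - f x) := by
  classical
  induction S using Finset.induction_on with
  | empty => simp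
  | @insert j S hj ih =>
    set b : ℤ := max (y j - x j) 0 with hbdef
    set uS : Fin n → ℤ := fun i => if i ∈ S then max (x i) (y i) else x i with huS
    have hins : (fun i => if i ∈ insert j S then max (x i) (y i) else x i)
        = uS + b • stdBasis n j := by
      funext i
      simp only [Pi.add_apply, smul_stdBasis_apply, huS, Finset.mem_insert]
      by_cases hij : i = j
      · subst hij
        simp [hj]
        omega
      · simp [hij]
    have huSbox : inBox K uS := by
      intro i
      simp only [huS]
      split
      · exact ⟨le_max_of_le_left (hx i).1, max_le (hx i).2 (hy i).2⟩
      · exact hx i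
    have hstep : f (uS + b • stdBasis n j) - f uS
        ≤ f (x + b • stdBasis n j) - f x := by
      rcases eq_or_lt_of_le (le_max_right (y j - x j) 0) with hb0 | hbpos
      · have hb0' : b = 0 := hb0.symm
        simp [hb0']
      · have hbox2 : inBox K (uS + b • stdBasis n j) := by
          rw [← hins]
          intro i
          dsimp only
          split
          · exact ⟨le_max_of_le_left (hx i).1, max_le (hx i).2 (hy i).2⟩
          · exact hx i
        exact hf x uS hx huSbox (fun i => by
          simp only [huS]; split
          · exact le_max_left _ _
          · exact le_refl _) j b hbpos hbox2
    rw [hins, Finset.sum_insert hj]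
    have := ih
    linarith

lemma dec_phase {n : ℕ} (K : Fin n → ℤ) (f : (Fin n → ℤ) → ℝ) (hf : DRSubmodular K f)
    (x y : Fin n → ℤ) (hx : inBox K x) (hy : inBox K y) (hKbox : inBox K K)
    (S : Finset (Fin n)) :
    f (fun i => if i ∈ S then y i else max (x i) (y i)) ≤
      f (fun i => max (x i) (y i))
        - ∑ i ∈ S, (f K - f (K - (max (x i - y i) 0) • stdBasis n i)) := by
  classical
  induction S using Finset.induction_on with
  | empty => simp
  | @insert j S hj ih =>
    set a : ℤ := max (x j - y j) 0 with hadef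
    set vS : Fin n → ℤ := fun i => if i ∈ S then y i else max (x i) (y i) with hvS
    have hins : (fun i => if i ∈ insert j S then y i else max (x i) (y i))
        = vS - a • stdBasis n j := by
      funext i
      simp only [Pi.sub_apply, smul_stdBasis_apply, hvS, Finset.mem_insert]
      by_cases hij : i = j
      · subst hij
        simp [hj]
        omega
      · simp [hij]
    have hvSbox : inBox K vS := by
      intro i
      simp only [hvS]
      split
      · exact hy i
      · exact ⟨le_max_of_le_left (hx i).1, max_le (hx i).2 (hy i).2⟩
    have hstep : f K - f (K - a • stdBasis n j) ≤ f vS - f (vS - a • stdBasis n j) := by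
      rcases eq_or_lt_of_le (le_max_right (x j - y j) 0) with ha0 | hapos
      · have ha0' : a = 0 := ha0.symm
        simp [ha0']
      · have hsub1 : vS - a • stdBasis n j + a • stdBasis n j = vS := by
          abel
        have hsub2 : K - a • stdBasis n j + a • stdBasis n j = K := by
          abel
        have hbox1 : inBox K (vS - a • stdBasis n j) := by
          rw [← hins]
          intro i
          dsimp only
          split
          · exact hy i
          · exact ⟨le_max_of_le_left (hx i).1, max_le (hx i).2 (hy i).2⟩
        have hbox2 : inBox K (K - a • stdBasis n j) := by
          intro i
          simp only [Pi.sub_apply, smul_stdBasis_apply]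
          by_cases hij : i = j
          · subst hij
            simp
            have h1 := hx i; have h2 := hy i
            omega
          · simp [hij, hKbox i]
        have hle : ∀ i, (vS - a • stdBasis n j) i ≤ (K - a • stdBasis n j) i := by
          intro i
          simp only [Pi.sub_apply]
          exact sub_le_sub_right (hvSbox i).2 _
        have := hf (vS - a • stdBasis n j) (K - a • stdBasis n j) hbox1 hbox2 hle j a hapos
          (by rw [hsub2]; exact hKbox)
        rw [hsub1, hsub2] at this
        linarith
    rw [hins, Finset.sum_insert hj]
    linarith

/-- For DR-submodular `f` on the box with maximal element `K`, and
`x, y` in the box, with `aᵢ = max (xᵢ - yᵢ) 0` and `bᵢ = max (yᵢ - xᵢ) 0`: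
`f(y) ≤ f(x) - ∑ᵢ [f(K) - f(K - aᵢ eᵢ)] + ∑ᵢ [f(x + bᵢ eᵢ) - f(x)]`. -/
theorem dr_modular_upper_bound_two' {n : ℕ} (K : Fin n → ℤ) (hK : ∀ i, 1 ≤ K i)
    (f : (Fin n → ℤ) → ℝ) (hf : DRSubmodular K f)
    (x y : Fin n → ℤ) (hx : inBox K x) (hy : inBox K y) :
    f y ≤ f x - ∑ i, (f K - f (K - (max (x i - y i) 0) • stdBasis n i))
        + ∑ i, (f (x + (max (y i - x i) 0) • stdBasis n i) - f x) := by
  classical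
  have hKbox : inBox K K := fun i => ⟨le_trans zero_le_one (hK i), le_refl _⟩
  have h1 := inc_phase K f hf x y hx hy Finset.univ
  have h2 := dec_phase K f hf x y hx hy hKbox Finset.univ
  simp only [Finset.mem_univ, if_true] at h1 h2
  linarith
end

section
/- Let f be a lattice submodular function on the box B = ∏_{i=1}^n {0,…,K_i} with f(0) = 0. Then f can be written as f = g + h on B, where g is a modular (separable) function and h is a monotone nondecreasing lattice submodular function with h(0) = 0. -/
/-- The separable piece: marginal of coordinate `i` measured at the top of the box. -/
noncomputable def gmod {n : ℕ} (K : Fin n → ℤ) (f : (Fin n → ℤ) → ℝ) (i : Fin n) (t : ℤ) : ℝ :=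
  f (Function.update K i t) - f (Function.update K i 0)

lemma inBox_update {n : ℕ} {K x : Fin n → ℤ} (hx : inBox K x) {i : Fin n} {t : ℤ}
    (h0 : 0 ≤ t) (h1 : t ≤ K i) : inBox K (Function.update x i t) := by
  intro j
  rcases eq_or_ne j i with rfl | hj
  · simpa using ⟨h0, h1⟩
  · simpa [Function.update_of_ne hj] using hx j

lemma inBox_K {n : ℕ} {K : Fin n → ℤ} (hK : ∀ i, 1 ≤ K i) : inBox K K :=
  fun i => ⟨le_trans zero_le_one (hK i), le_refl _⟩

lemma key_step {n : ℕ} {K : Fin n → ℤ} (hK : ∀ i, 1 ≤ K i) {f : (Fin n → ℤ) → ℝ}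
    (hf : LatticeSubmodular K f) {x : Fin n → ℤ} (hx : inBox K x)
    (i : Fin n) (hxi : x i < K i) :
    f (Function.update K i (x i + 1)) - f (Function.update K i (x i))
      ≤ f (Function.update x i (x i + 1)) - f x := by
  have ha : inBox K (Function.update x i (x i + 1)) :=
    inBox_update hx (by linarith [(hx i).1]) (by linarith)
  have hb : inBox K (Function.update K i (x i)) :=
    inBox_update (inBox_K hK) (hx i).1 (hx i).2
  have H := hf _ _ ha hb
  have hmin : (fun j => min (Function.update x i (x i + 1) j) (Function.update K i (x i) j)) = x := by
    funext j
    rcases eq_or_ne j i with rfl | hj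
    · simp
    · simp [Function.update_of_ne hj, min_eq_left (hx j).2]
  have hmax : (fun j => max (Function.update x i (x i + 1) j) (Function.update K i (x i) j))
      = Function.update K i (x i + 1) := by
    funext j
    rcases eq_or_ne j i with rfl | hj
    · simp
    · simp [Function.update_of_ne hj, max_eq_right (hx j).2]
  rw [hmin, hmax] at H
  linarith

/-- One monotone step for `h = f - g`. -/
lemma h_step {n : ℕ} {K : Fin n → ℤ} (hK : ∀ i, 1 ≤ K i) {f : (Fin n → ℤ) → ℝ}
    (hf : LatticeSubmodular K f) {x : Fin n → ℤ} (hx : inBox K x)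
    (i : Fin n) (hxi : x i < K i) :
    f x - ∑ j, gmod K f j (x j)
      ≤ f (Function.update x i (x i + 1))
        - ∑ j, gmod K f j (Function.update x i (x i + 1) j) := by
  have hkey := key_step hK hf hx i hxi
  have hsum : ∑ j, gmod K f j (Function.update x i (x i + 1) j)
      - ∑ j, gmod K f j (x j)
      = f (Function.update K i (x i + 1)) - f (Function.update K i (x i)) := by
    rw [← Finset.sum_sub_distrib]
    rw [Finset.sum_eq_single i]
    · simp [gmod]
    · intro j _ hj
      simp [Function.update_of_ne hj]
    · simp
  linarith

lemma h_mono_aux {n : ℕ} {K : Fin n → ℤ} (hK : ∀ i, 1 ≤ K i) {f : (Fin n → ℤ) → ℝ}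
    (hf : LatticeSubmodular K f) :
    ∀ N : ℕ, ∀ x y : Fin n → ℤ, inBox K x → inBox K y → (∀ i, x i ≤ y i) →
      (∑ i, (y i - x i).toNat) = N →
      f x - ∑ j, gmod K f j (x j) ≤ f y - ∑ j, gmod K f j (y j) := by
  intro N
  induction N with
  | zero =>
    intro x y hx hy hxy hsum
    have : x = y := by
      funext i
      have := Finset.sum_eq_zero_iff.mp hsum i (Finset.mem_univ i)
      have := hxy i
      omega
    rw [this]
  | succ N ih =>
    intro x y hx hy hxy hsum
    have hex : ∃ i, x i < y i := by
      by_contra hc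
      push_neg at hc
      have : ∑ i, (y i - x i).toNat = 0 := by
        apply Finset.sum_eq_zero
        intro i _
        have := hc i
        omega
      omega
    obtain ⟨i, hi⟩ := hex
    set x' := Function.update x i (x i + 1) with hx'def
    have hx' : inBox K x' := inBox_update hx (by linarith [(hx i).1]) (by linarith [(hy i).2])
    have hx'y : ∀ j, x' j ≤ y j := by
      intro j
      rcases eq_or_ne j i with rfl | hj
      · simp [hx'def]; omega
      · simp [hx'def, Function.update_of_ne hj]; exact hxy j
    have hsum' : ∑ j, (y j - x' j).toNat = N := by
      have h1 : (y i - x' i).toNat + 1 = (y i - x i).toNat := by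
        simp [hx'def]; omega
      rw [← Finset.sum_erase_add _ _ (Finset.mem_univ i)] at hsum ⊢
      have h2 : ∑ j ∈ Finset.univ.erase i, (y j - x' j).toNat
          = ∑ j ∈ Finset.univ.erase i, (y j - x j).toNat := by
        apply Finset.sum_congr rfl
        intro j hj
        simp [hx'def, Function.update_of_ne (Finset.ne_of_mem_erase hj)]
      omega
    have step := h_step hK hf hx i (lt_of_lt_of_le hi (hy i).2)
    have rest := ih x' y hx' hy hx'y hsum'
    calc f x - ∑ j, gmod K f j (x j) ≤ f x' - ∑ j, gmod K f j (x' j) := step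
      _ ≤ f y - ∑ j, gmod K f j (y j) := rest

theorem lattice_submodular_eq_modular_add_monotone {n : ℕ} (K : Fin n → ℤ)
    (hK : ∀ i, 1 ≤ K i)
    (f : (Fin n → ℤ) → ℝ) (hf : LatticeSubmodular K f) (hf0 : f 0 = 0) :
    ∃ g h : (Fin n → ℤ) → ℝ,
      IsModular K g ∧
      LatticeSubmodular K h ∧
      (∀ x y, inBox K x → inBox K y → (∀ i, x i ≤ y i) → h x ≤ h y) ∧
      h 0 = 0 ∧
      (∀ x, inBox K x → f x = g x + h x) := by
  refine ⟨fun x => ∑ i, gmod K f i (x i), fun x => f x - ∑ i, gmod K f i (x i),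
    ⟨gmod K f, fun x _ => rfl⟩, ?_, ?_, ?_, ?_⟩
  · -- lattice submodular
    intro x y hx hy
    have hg : ∀ i, gmod K f i (min (x i) (y i)) + gmod K f i (max (x i) (y i))
        = gmod K f i (x i) + gmod K f i (y i) := by
      intro i
      rcases le_total (x i) (y i) with h | h
      · rw [min_eq_left h, max_eq_right h]
      · rw [min_eq_right h, max_eq_left h]; ring
    have hgsum : (∑ i, gmod K f i (min (x i) (y i))) + ∑ i, gmod K f i (max (x i) (y i))
        = (∑ i, gmod K f i (x i)) + ∑ i, gmod K f i (y i) := by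
      rw [← Finset.sum_add_distrib, ← Finset.sum_add_distrib]
      exact Finset.sum_congr rfl fun i _ => hg i
    have := hf x y hx hy
    dsimp only
    linarith
  · -- monotone
    intro x y hx hy hxy
    exact h_mono_aux hK hf _ x y hx hy hxy rfl
  · -- h 0 = 0
    simp [gmod, hf0]
  · intro x _
    ring
end

section
/- Let v be any real-valued function on the box B = ∏_{i=1}^n {0,…,K_i}. Then there exist lattice submodular functions f and g on B such that v(x) = f(x) − g(x) for all x ∈ B. -/
/-- every function on the box is a difference of two lattice
submodular functions. -/
theorem exists_submodular_difference {n : ℕ} (K : Fin n → ℤ) (hK : ∀ i, 1 ≤ K i)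
    (v : (Fin n → ℤ) → ℝ) :
    ∃ f g : (Fin n → ℤ) → ℝ,
      LatticeSubmodular K f ∧ LatticeSubmodular K g ∧
      ∀ x, inBox K x → v x = f x - g x := by
  classical
  set S : Finset (Fin n → ℤ) := Fintype.piFinset (fun i => Finset.Icc 0 (K i)) with hS
  have hmem : ∀ x, inBox K x → x ∈ S := by
    intro x hx
    simp only [hS, Fintype.mem_piFinset, Finset.mem_Icc]
    exact fun i => hx i
  have h0 : inBox K 0 := fun i => ⟨le_refl _, le_trans zero_le_one (hK i)⟩
  have hSne : S.Nonempty := ⟨0, hmem 0 h0⟩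
  set M : ℝ := S.sup' hSne (fun z => |v z|) with hMdef
  have hM : ∀ z, inBox K z → |v z| ≤ M := fun z hz => Finset.le_sup' (fun z => |v z|) (hmem z hz)
  have hM0 : (0:ℝ) ≤ M := le_trans (abs_nonneg _) (hM 0 h0)
  set C : ℝ := 2 * M + 1 with hCdef
  have hC0 : (0:ℝ) ≤ C := by linarith
  set h : (Fin n → ℤ) → ℝ := fun x => -(((∑ i, x i : ℤ) : ℝ))^2 with hhdef
  have key : ∀ x y : Fin n → ℤ,
      (∑ i, min (x i) (y i)) + (∑ i, max (x i) (y i)) = (∑ i, x i) + (∑ i, y i) := by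
    intro x y
    rw [← Finset.sum_add_distrib, ← Finset.sum_add_distrib]
    exact Finset.sum_congr rfl fun i _ => min_add_max _ _
  have hid : ∀ x y : Fin n → ℤ,
      h (fun i => min (x i) (y i)) + h (fun i => max (x i) (y i))
        = h x + h y
          - 2 * ((((∑ i, x i) - ∑ i, min (x i) (y i) : ℤ) : ℝ)
              * (((∑ i, y i) - ∑ i, min (x i) (y i) : ℤ) : ℝ)) := by
    intro x y
    have hk := key x y
    have hd : (∑ i, max (x i) (y i)) = (∑ i, x i) + (∑ i, y i) - (∑ i, min (x i) (y i)) := by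
      omega
    simp only [hhdef, hd]
    push_cast
    ring
  have amin : ∀ x y : Fin n → ℤ, (∑ i, min (x i) (y i)) ≤ ∑ i, x i :=
    fun x y => Finset.sum_le_sum fun i _ => min_le_left _ _
  have amin' : ∀ x y : Fin n → ℤ, (∑ i, min (x i) (y i)) ≤ ∑ i, y i :=
    fun x y => Finset.sum_le_sum fun i _ => min_le_right _ _
  have hgsub : LatticeSubmodular K (fun x => C * h x) := by
    intro x y hx hy
    dsimp only
    have hi := hid x y
    have h1 : (0:ℝ) ≤ (((∑ i, x i) - ∑ i, min (x i) (y i) : ℤ) : ℝ)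
        * (((∑ i, y i) - ∑ i, min (x i) (y i) : ℤ) : ℝ) := by
      apply mul_nonneg
      · exact_mod_cast sub_nonneg.2 (amin x y)
      · exact_mod_cast sub_nonneg.2 (amin' x y)
    calc C * h (fun i => min (x i) (y i)) + C * h (fun i => max (x i) (y i))
        = C * (h (fun i => min (x i) (y i)) + h (fun i => max (x i) (y i))) := by ring
      _ = C * (h x + h y
            - 2 * ((((∑ i, x i) - ∑ i, min (x i) (y i) : ℤ) : ℝ)
              * (((∑ i, y i) - ∑ i, min (x i) (y i) : ℤ) : ℝ))) := by rw [hi]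
      _ = C * h x + C * h y
            - 2 * (C * ((((∑ i, x i) - ∑ i, min (x i) (y i) : ℤ) : ℝ)
              * (((∑ i, y i) - ∑ i, min (x i) (y i) : ℤ) : ℝ))) := by ring
      _ ≤ C * h x + C * h y := by nlinarith [mul_nonneg hC0 h1]
  refine ⟨fun x => v x + C * h x, fun x => C * h x, ?_, hgsub, fun x _ => by ring⟩
  intro x y hx hy
  dsimp only
  by_cases hxy : ∀ i, x i ≤ y i
  · have hmn : (fun i => min (x i) (y i)) = x := funext fun i => min_eq_left (hxy i)
    have hmx : (fun i => max (x i) (y i)) = y := funext fun i => max_eq_right (hxy i)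
    rw [hmn, hmx]
  · by_cases hyx : ∀ i, y i ≤ x i
    · have hmn : (fun i => min (x i) (y i)) = y := funext fun i => min_eq_right (hyx i)
      have hmx : (fun i => max (x i) (y i)) = x := funext fun i => max_eq_left (hyx i)
      rw [hmn, hmx]; linarith
    · push_neg at hxy hyx
      obtain ⟨j, hj⟩ := hxy
      obtain ⟨i, hi⟩ := hyx
      have hap : (∑ i, min (x i) (y i)) < ∑ i, x i :=
        Finset.sum_lt_sum (fun k _ => min_le_left _ _)
          ⟨j, Finset.mem_univ j, min_lt_iff.2 (Or.inr hj)⟩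
      have haq : (∑ i, min (x i) (y i)) < ∑ i, y i :=
        Finset.sum_lt_sum (fun k _ => min_le_right _ _)
          ⟨i, Finset.mem_univ i, min_lt_iff.2 (Or.inl hi)⟩
      have hP : (1:ℤ) ≤ ((∑ i, x i) - ∑ i, min (x i) (y i))
          * ((∑ i, y i) - ∑ i, min (x i) (y i)) := by
        have h1 := Int.add_one_le_of_lt hap
        have h2 := Int.add_one_le_of_lt haq
        nlinarith
      have hPR : (1:ℝ) ≤ (((∑ i, x i) - ∑ i, min (x i) (y i) : ℤ) : ℝ)
          * (((∑ i, y i) - ∑ i, min (x i) (y i) : ℤ) : ℝ) := by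
        exact_mod_cast hP
      have hmnB : inBox K (fun i => min (x i) (y i)) :=
        fun k => ⟨le_min (hx k).1 (hy k).1, le_trans (min_le_left _ _) (hx k).2⟩
      have hmxB : inBox K (fun i => max (x i) (y i)) :=
        fun k => ⟨le_trans (hx k).1 (le_max_left _ _), max_le (hx k).2 (hy k).2⟩
      have b1 := abs_le.1 (hM _ hmnB)
      have b2 := abs_le.1 (hM _ hmxB)
      have b3 := abs_le.1 (hM _ hx)
      have b4 := abs_le.1 (hM _ hy)
      have hCP : C * 1 ≤ C * ((((∑ i, x i) - ∑ i, min (x i) (y i) : ℤ) : ℝ)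
          * (((∑ i, y i) - ∑ i, min (x i) (y i) : ℤ) : ℝ)) :=
        mul_le_mul_of_nonneg_left hPR hC0
      have hi2 := hid x y
      have hch : C * h (fun i => min (x i) (y i)) + C * h (fun i => max (x i) (y i))
          = C * h x + C * h y
            - 2 * (C * ((((∑ i, x i) - ∑ i, min (x i) (y i) : ℤ) : ℝ)
              * (((∑ i, y i) - ∑ i, min (x i) (y i) : ℤ) : ℝ))) := by
        calc C * h (fun i => min (x i) (y i)) + C * h (fun i => max (x i) (y i))
            = C * (h (fun i => min (x i) (y i)) + h (fun i => max (x i) (y i))) := by ring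
          _ = C * (h x + h y
                - 2 * ((((∑ i, x i) - ∑ i, min (x i) (y i) : ℤ) : ℝ)
                  * (((∑ i, y i) - ∑ i, min (x i) (y i) : ℤ) : ℝ))) := by rw [hi2]
          _ = _ := by ring
      linarith [b1.1, b1.2, b2.1, b2.2, b3.1, b3.2, b4.1, b4.2]
end
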